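/- Let p be a prime, let G be a finite p-group of rank n with Frattini subgroup Φ(G), and let H be a subgroup with Φ(G) ≤ H ≤ G. Then for 0 ≤ k ≤ n, the intersection number of H equals n − k if and only if the index [G : H] equals p^{n−k} (equivalently, the image of H in G/Φ(G) has order p^k). -/

import Mathlib

/-- The subgroup `H` has intersection number `m`: it is an intersection of `m` maximal
subgroups but not an intersection of fewer than `m` maximal subgroups. (The intersection
of zero maximal subgroups is `G`, so `G` itself has intersection number `0`.) -/
def GroupInterNumEq {G : Type*} [Group G] (H : Subgroup G) (m : ℕ) : Prop :=
  (∃ f : Fin m → Subgroup G, (∀ i, IsCoatom (f i)) ∧ (⨅ i, f i) = H) ∧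
    ∀ j < m, ¬ ∃ f : Fin j → Subgroup G, (∀ i, IsCoatom (f i)) ∧ (⨅ i, f i) = H

/-!
Every maximal subgroup of a finite `p`-group is normal of index `p`, so `G/Φ(G)` is elementary
abelian. Hence an intersection of `m` maximal subgroups has index at most `p ^ m`. Conversely, if
`Φ(G) ≤ H` and `[G : H] = p ^ (j + 1)`, pick a maximal `M ≥ H` and `g ∉ M`; the preimage `K` of
`⟨gH⟩` satisfies `[K : H] = p` and `[G : K] = p ^ j`, and `M ⊓ K = H` because `[K : H]` is prime.
By induction `H` is an intersection of `j + 1` maximal subgroups.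
-/

open Subgroup

lemma Fin.iInf_cons {α : Type*} [CompleteLattice α] {j : ℕ} (a : α) (f : Fin j → α) :
    ⨅ i, (Fin.cons a f : Fin (j + 1) → α) i = a ⊓ ⨅ i, f i := by
  rw [← (finSuccEquiv j).symm.iInf_comp, iInf_option]
  simp

lemma Subgroup.eq_of_le_of_relIndex_prime {G : Type*} [Group G] {H K L : Subgroup G}
    (hHK : H ≤ K) (hKL : K ≤ L) (hLK : ¬L ≤ K) (hprime : (H.relIndex L).Prime) : K = H := by
  rw [← relIndex_mul_relIndex H K L hHK hKL, Nat.prime_mul_iff] at hprime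
  have hKL_ne_one : K.relIndex L ≠ 1 := fun h => hLK (relIndex_eq_one.mp h)
  have hHK_one : H.relIndex K = 1 := by tauto
  exact le_antisymm (relIndex_eq_one.mp hHK_one) hHK

namespace IsPGroup

variable {p : ℕ} [hp : Fact p.Prime] {G : Type*} [Group G] [Finite G]

theorem index_eq_of_isCoatom (hG : IsPGroup p G) {M : Subgroup G} (hM : IsCoatom M) :
    M.index = p := by
  obtain ⟨a, ha⟩ := (hG.to_subgroup M).exists_card_eq
  obtain ⟨c, hc⟩ := hG.index M
  have hc0 : c ≠ 0 := by
    rintro rfl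
    exact hM.1 (index_eq_one.mp hc)
  have hcard : Nat.card G = p ^ a * p ^ c := by rw [← M.card_mul_index, ha, hc]
  obtain ⟨K, hK, hMK⟩ := Sylow.exists_subgroup_card_pow_succ
    (by rw [hcard, pow_succ]; exact mul_dvd_mul_left _ (dvd_pow_self p hc0)) ha
  have hMK_ne : M ≠ K := by
    rintro rfl
    exact Nat.pow_right_injective hp.out.two_le (ha.symm.trans hK) |>.not_lt (Nat.lt_succ_self a)
  rw [hM.2 K (hMK.lt_of_ne hMK_ne), card_top, hcard, pow_succ] at hK
  rw [hc, Nat.eq_of_mul_eq_mul_left (pow_pos hp.out.pos a) hK]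

theorem normal_of_isCoatom (hG : IsPGroup p G) {M : Subgroup G} (hM : IsCoatom M) : M.Normal :=
  (Group.isNilpotent_of_finite_tfae.out 0 2 rfl rfl).mp hG.isNilpotent M hM

theorem commutator_le_of_isCoatom (hG : IsPGroup p G) {M : Subgroup G} (hM : IsCoatom M) :
    commutator G ≤ M := by
  have := hG.normal_of_isCoatom hM
  have : IsCyclic (G ⧸ M) := isCyclic_of_prime_card (hG.index_eq_of_isCoatom hM)
  exact Normal.quotient_commutative_iff_commutator_le.mp inferInstance

theorem commutator_le_frattini (hG : IsPGroup p G) : commutator G ≤ frattini G :=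
  le_iInf₂ fun _ => hG.commutator_le_of_isCoatom

theorem pow_mem_frattini (hG : IsPGroup p G) (x : G) : x ^ p ∈ frattini G := by
  simp only [frattini, Order.radical, mem_iInf]
  intro M hM
  have := hG.normal_of_isCoatom hM
  simpa only [hG.index_eq_of_isCoatom hM] using M.pow_index_mem x

theorem normal_of_frattini_le (hG : IsPGroup p G) {H : Subgroup G} (hfr : frattini G ≤ H) :
    H.Normal :=
  Subgroup.Normal.of_commutator_le G (hG.commutator_le_frattini.trans hfr)

theorem index_iInf_le_of_isCoatom (hG : IsPGroup p G) {ι : Type*} [Fintype ι]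
    {f : ι → Subgroup G} (hf : ∀ i, IsCoatom (f i)) : (⨅ i, f i).index ≤ p ^ Fintype.card ι :=
  (index_iInf_le f).trans_eq (by simp [fun i => hG.index_eq_of_isCoatom (hf i)])

theorem exists_relIndex_eq_of_notMem (hG : IsPGroup p G) {H : Subgroup G}
    (hfr : frattini G ≤ H) {g : G} (hg : g ∉ H) : ∃ K, H ≤ K ∧ g ∈ K ∧ H.relIndex K = p := by
  have := hG.normal_of_frattini_le hfr
  set π := QuotientGroup.mk' H
  have horder : orderOf (π g) = p := by
    apply orderOf_eq_prime
    · rw [← map_pow, QuotientGroup.mk'_apply, QuotientGroup.eq_one_iff]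
      exact hfr (hG.pow_mem_frattini g)
    · rwa [Ne, QuotientGroup.mk'_apply, QuotientGroup.eq_one_iff]
  have hHK : H ≤ (zpowers (π g)).comap π :=
    (QuotientGroup.ker_mk' H).ge.trans (ker_le_comap π _)
  refine ⟨_, hHK, mem_comap.mpr (mem_zpowers _), ?_⟩
  have hindex := relIndex_mul_index hHK
  rw [index_comap_of_surjective _ (QuotientGroup.mk'_surjective H)] at hindex
  have hcard := (zpowers (π g)).card_mul_index
  rw [Nat.card_zpowers, horder] at hcard
  exact Nat.eq_of_mul_eq_mul_right (Nat.pos_of_ne_zero index_ne_zero_of_finite)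
    (hindex.trans hcard.symm)

theorem exists_iInf_isCoatom_eq (hG : IsPGroup p G) {H : Subgroup G} (hfr : frattini G ≤ H)
    {j : ℕ} (hj : H.index = p ^ j) :
    ∃ f : Fin j → Subgroup G, (∀ i, IsCoatom (f i)) ∧ ⨅ i, f i = H := by
  induction j generalizing H with
  | zero =>
    refine ⟨Fin.elim0, fun i => i.elim0, ?_⟩
    rw [iInf_of_empty]
    exact (index_eq_one.mp (by simpa using hj)).symm
  | succ j ih =>
    have hH_ne_top : H ≠ ⊤ := by
      rintro rfl
      rw [index_top] at hj
      exact (Nat.one_lt_pow j.succ_ne_zero hp.out.one_lt).ne hj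
    obtain ⟨M, hM, hHM⟩ := (eq_top_or_exists_le_coatom H).resolve_left hH_ne_top
    obtain ⟨g, hgM⟩ := SetLike.exists_not_mem_of_ne_top M hM.1
    obtain ⟨K, hHK, hgK, hHK_index⟩ :=
      hG.exists_relIndex_eq_of_notMem hfr fun hgH => hgM (hHM hgH)
    have hK : K.index = p ^ j := by
      have := relIndex_mul_index hHK
      rw [hHK_index, hj, pow_succ'] at this
      exact Nat.eq_of_mul_eq_mul_left hp.out.pos this
    obtain ⟨f, hf, hfK⟩ := ih (hfr.trans hHK) hK
    refine ⟨Fin.cons M f, Fin.cases hM hf, ?_⟩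
    rw [Fin.iInf_cons, hfK]
    exact eq_of_le_of_relIndex_prime (le_inf hHM hHK) inf_le_right (fun h => hgM (h hgK).1)
      (hHK_index ▸ hp.out)

theorem groupInterNumEq_iff_index_eq (hG : IsPGroup p G) {H : Subgroup G}
    (hfr : frattini G ≤ H) {m : ℕ} : GroupInterNumEq H m ↔ H.index = p ^ m := by
  obtain ⟨j, hj⟩ := hG.index H
  have hle : ∀ {i : ℕ}, (∃ f : Fin i → Subgroup G, (∀ l, IsCoatom (f l)) ∧ ⨅ l, f l = H) →
      j ≤ i := by
    rintro i ⟨f, hf, hfH⟩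
    have := hG.index_iInf_le_of_isCoatom hf
    rw [hfH, hj, Fintype.card_fin] at this
    exact (Nat.pow_le_pow_iff_right hp.out.one_lt).mp this
  rw [hj, (Nat.pow_right_injective hp.out.two_le).eq_iff]
  constructor
  · rintro ⟨hm, hmin⟩
    exact (hle hm).antisymm (not_lt.mp fun hjm => hmin j hjm (hG.exists_iInf_isCoatom_eq hfr hj))
  · rintro rfl
    exact ⟨hG.exists_iInf_isCoatom_eq hfr hj, fun i hi hex => (hle hex).not_gt hi⟩

end IsPGroup

theorem interNum_iff_index_general (p n k : ℕ) (hp : p.Prime) (G : Type*) [Group G] [Finite G]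
    (hG : IsPGroup p G) (H : Subgroup G) (hfr : frattini G ≤ H) :
    GroupInterNumEq H (n - k) ↔ H.index = p ^ (n - k) :=
  have : Fact p.Prime := ⟨hp⟩
  hG.groupInterNumEq_iff_index_eq hfr

/-- Let `G` be a finite `p`-group of rank `n` and let `H` be a subgroup containing the
Frattini subgroup. For `0 ≤ k ≤ n`, the intersection number of `H` is `n - k` if and
only if the index `[G : H]` is `p^(n-k)`. -/
theorem interNum_iff_index (p n k : ℕ) (hp : p.Prime) (G : Type*) [Group G] [Finite G]
    (hG : IsPGroup p G) (hrank : Group.rank G = n) (H : Subgroup G)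
    (hfr : frattini G ≤ H) (hk : k ≤ n) :
    GroupInterNumEq H (n - k) ↔ H.index = p ^ (n - k) :=
  interNum_iff_index_general p n k hp G hG H hfr
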